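/- Let the general recurrent-IFS interpolation setup hold. Let h : I×J → ℝ be continuous with h(x_i,y_j)=z_{ij} for all i,j, let S : I×J → ℝ be continuous with max|S|<1, and for each (i,j) let g_{ij} : D'_{ij} → ℝ be continuous with g_{ij}(x'_k,y'_ℓ)=z'_{kℓ} for (k,ℓ)∈{i−1,i}×{j−1,j}. Define F_{ij}(x,y,z)=S(u_i(x),v_j(y))(z−g_{ij}(x,y))+h(u_i(x),v_j(y)). Assume the g-matchable conditions: (1) for all 1≤i≤N−1, 1≤j≤M and x*=u_i^{-1}(x_i)=u_{i+1}^{-1}(x_i): g_{ij}(x*,y)=g_{i+1,j}(x*,y) for all y∈J'_j; (2) for all 1≤i≤N, 1≤j≤M−1 and y*=v_j^{-1}(y_j)=v_{j+1}^{-1}(y_j): g_{ij}(x,y*)=g_{i,j+1}(x,y*) for all x∈I'_i. Then there exists a unique continuous f : I×J → ℝ with f(x_i,y_j)=z_{ij} for all i,j and f(u_i(x),v_j(y))=F_{ij}(x,y,f(x,y)) for all (x,y)∈D'_{ij} and all i,j. -/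

import Mathlib

/- General recurrent-IFS interpolation setup (Liang–Ruan,
   "Construction and box dimension of recurrent fractal interpolation surfaces"). -/

noncomputable section
open Set

/-- Data of the general recurrent-IFS interpolation setup: grid points `x i`, `y j`
(for `i ≤ N`, `j ≤ M`), interpolation values `z i j`, index maps `px`, `py` selecting
the points `x' i = x (px i)`, `y' j = y (py j)`, the horizontal contractions `u i`, `v j`,
the maps `F i j`, and the contraction ratios `alpha i j`. -/
structure GenData where
  N : ℕ
  M : ℕ
  x : ℕ → ℝ
  y : ℕ → ℝ
  z : ℕ → ℕ → ℝ
  px : ℕ → ℕ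
  py : ℕ → ℕ
  u : ℕ → ℝ → ℝ
  v : ℕ → ℝ → ℝ
  F : ℕ → ℕ → ℝ → ℝ → ℝ → ℝ
  alpha : ℕ → ℕ → ℝ

namespace GenData

def x' (D : GenData) (i : ℕ) : ℝ := D.x (D.px i)
def y' (D : GenData) (j : ℕ) : ℝ := D.y (D.py j)
def I (D : GenData) : Set ℝ := Icc (D.x 0) (D.x D.N)
def J (D : GenData) : Set ℝ := Icc (D.y 0) (D.y D.M)
def Ii (D : GenData) (i : ℕ) : Set ℝ := Icc (D.x (i - 1)) (D.x i)
def Jj (D : GenData) (j : ℕ) : Set ℝ := Icc (D.y (j - 1)) (D.y j)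
def Dij (D : GenData) (i j : ℕ) : Set (ℝ × ℝ) := D.Ii i ×ˢ D.Jj j
def Ii' (D : GenData) (i : ℕ) : Set ℝ := uIcc (D.x' (i - 1)) (D.x' i)
def Jj' (D : GenData) (j : ℕ) : Set ℝ := uIcc (D.y' (j - 1)) (D.y' j)
def Dij' (D : GenData) (i j : ℕ) : Set (ℝ × ℝ) := D.Ii' i ×ˢ D.Jj' j
def z' (D : GenData) (i j : ℕ) : ℝ := D.z (D.px i) (D.py j)

/-- Hypotheses on the grid data: `N, M ≥ 2`, increasing grids, `x' i` chosen from the grid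
with `|x'_i - x'_{i-1}| > x_i - x_{i-1}`, and each `u i` (resp. `v j`) a contractive
homeomorphism from `I'_i` onto `I_i` (resp. `J'_j` onto `J_j`) with the endpoint conditions. -/
structure GridHyp (D : GenData) : Prop where
  hN : 2 ≤ D.N
  hM : 2 ≤ D.M
  hx : ∀ i < D.N, D.x i < D.x (i + 1)
  hy : ∀ j < D.M, D.y j < D.y (j + 1)
  hpx : ∀ i ≤ D.N, D.px i ≤ D.N
  hpy : ∀ j ≤ D.M, D.py j ≤ D.M
  hgapx : ∀ i, 1 ≤ i → i ≤ D.N → D.x i - D.x (i - 1) < |D.x' i - D.x' (i - 1)|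
  hgapy : ∀ j, 1 ≤ j → j ≤ D.M → D.y j - D.y (j - 1) < |D.y' j - D.y' (j - 1)|
  hu : ∀ i, 1 ≤ i → i ≤ D.N →
    (∃ c, 0 ≤ c ∧ c < 1 ∧ ∀ s ∈ D.Ii' i, ∀ t ∈ D.Ii' i, |D.u i s - D.u i t| ≤ c * |s - t|) ∧
    Set.BijOn (D.u i) (D.Ii' i) (D.Ii i) ∧
    D.u i (D.x' (i - 1)) = D.x (i - 1) ∧ D.u i (D.x' i) = D.x i
  hv : ∀ j, 1 ≤ j → j ≤ D.M →
    (∃ c, 0 ≤ c ∧ c < 1 ∧ ∀ s ∈ D.Jj' j, ∀ t ∈ D.Jj' j, |D.v j s - D.v j t| ≤ c * |s - t|) ∧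
    Set.BijOn (D.v j) (D.Jj' j) (D.Jj j) ∧
    D.v j (D.y' (j - 1)) = D.y (j - 1) ∧ D.v j (D.y' j) = D.y j

/-- Hypotheses on the maps `F i j`: continuity on `D'_{ij} × ℝ`, the interpolation
(corner) conditions, and the uniform contraction in the third variable. -/
structure FHyp (D : GenData) : Prop where
  hFcont : ∀ i j, 1 ≤ i → i ≤ D.N → 1 ≤ j → j ≤ D.M →
    ContinuousOn (fun p : (ℝ × ℝ) × ℝ => D.F i j p.1.1 p.1.2 p.2) (D.Dij' i j ×ˢ (univ : Set ℝ))
  hFval : ∀ i j, 1 ≤ i → i ≤ D.N → 1 ≤ j → j ≤ D.M →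
    ∀ k ∈ ({i - 1, i} : Set ℕ), ∀ l ∈ ({j - 1, j} : Set ℕ),
      D.F i j (D.x' k) (D.y' l) (D.z' k l) = D.z k l
  halpha : ∀ i j, 1 ≤ i → i ≤ D.N → 1 ≤ j → j ≤ D.M → 0 < D.alpha i j ∧ D.alpha i j < 1
  hFlip : ∀ i j, 1 ≤ i → i ≤ D.N → 1 ≤ j → j ≤ D.M →
    ∀ p ∈ D.Dij' i j, ∀ z1 z2 : ℝ,
      |D.F i j p.1 p.2 z1 - D.F i j p.1 p.2 z2| ≤ D.alpha i j * |z1 - z2|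

/-- The matchable conditions.  Here `x* = u_i⁻¹(x_i) = u_{i+1}⁻¹(x_i) = x'_i` and
`y* = v_j⁻¹(y_j) = v_{j+1}⁻¹(y_j) = y'_j` (since `u i (x' i) = u (i+1) (x' i) = x i`
and `u i`, `u (i+1)` are injective, and similarly for `v`). -/
def Matchable (D : GenData) : Prop :=
  (∀ i j, 1 ≤ i → i < D.N → 1 ≤ j → j ≤ D.M →
    ∀ t ∈ D.Jj' j, ∀ w : ℝ, D.F i j (D.x' i) t w = D.F (i + 1) j (D.x' i) t w) ∧
  (∀ i j, 1 ≤ i → i ≤ D.N → 1 ≤ j → j < D.M →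
    ∀ t ∈ D.Ii' i, ∀ w : ℝ, D.F i j t (D.y' j) w = D.F i (j + 1) t (D.y' j) w)

/-- `f` is a recurrent fractal interpolation function for the data: it is continuous on
`I × J`, interpolates the data, and satisfies the self-referential equation
`f (u_i x, v_j y) = F_{ij} (x, y, f (x, y))` on each `D'_{ij}` (equivalently, the pieces
of its graph form the invariant set of the recurrent IFS `{W_{ij}}`). -/
def IsRFIF (D : GenData) (f : ℝ × ℝ → ℝ) : Prop :=
  ContinuousOn f (D.I ×ˢ D.J) ∧
  (∀ i ≤ D.N, ∀ j ≤ D.M, f (D.x i, D.y j) = D.z i j) ∧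
  (∀ i j, 1 ≤ i → i ≤ D.N → 1 ≤ j → j ≤ D.M →
    ∀ p ∈ D.Dij' i j, f (D.u i p.1, D.v j p.2) = D.F i j p.1 p.2 (f p))

end GenData

/-! An RFIF is exactly a continuous fixed point of the Read–Bajraktarević operator
`(T φ) (u_i x, v_j y) = F_ij (x, y, φ (x, y))` on `I × J`. The matchable conditions make the
pieces of `T φ` on adjacent cells agree on their common edge, so `T φ` is continuous, and
`|F_ij (x, y, w) - F_ij (x, y, w')| ≤ σ |w - w'|`, where `σ = max |S| < 1` on the compact `I × J`,
makes `T` a contraction for the sup norm; Banach's theorem gives the unique fixed point. A fixed point interpolates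
automatically: the errors `e_kl = f (x_k, y_l) - z_kl` satisfy `|e_kl| ≤ σ |e_{k'l'}|` with
`x'_k = x_{k'}`, `y'_l = y_{l'}`, so their maximum vanishes. -/

open Function

theorem Set.BijOn.continuousOn_invFunOn {α β : Type*} [Nonempty α] [TopologicalSpace α]
    [TopologicalSpace β] [T2Space β] {f : α → β} {s : Set α} {t : Set β} (hf : BijOn f s t)
    (hs : IsCompact s) (hfc : ContinuousOn f s) : ContinuousOn (invFunOn f s) t := by
  rw [continuousOn_iff_isClosed]
  intro c hc
  refine ⟨f '' (c ∩ s), ((hs.inter_left hc).image_of_continuousOn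
    (hfc.mono inter_subset_right)).isClosed, ?_⟩
  rw [← hf.image_eq, hf.invOn_invFunOn.1.image_inter', inter_assoc, inter_self]

theorem IsCompact.exists_forall_abs_le_lt_one {β : Type*} [TopologicalSpace β] {K : Set β}
    (hK : IsCompact K) {S : β → ℝ} (hS : ContinuousOn S K) (hlt : ∀ p ∈ K, |S p| < 1) :
    ∃ σ, 0 < σ ∧ σ < 1 ∧ ∀ p ∈ K, |S p| ≤ σ := by
  rcases K.eq_empty_or_nonempty with rfl | hne
  · exact ⟨1 / 2, by norm_num, by norm_num, fun p hp => hp.elim⟩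
  obtain ⟨p₀, hp₀, hmax⟩ := hK.exists_isMaxOn hne hS.abs
  exact ⟨max |S p₀| (1 / 2), by positivity, max_lt (hlt p₀ hp₀) (by norm_num),
    fun p hp => (hmax hp).trans (le_max_left _ _)⟩

theorem Finset.eq_zero_of_abs_le_mul_abs_comp {ι : Type*} {s : Finset ι} {e : ι → ℝ}
    {π : ι → ι} {σ : ℝ} (hσ₀ : 0 ≤ σ) (hσ : σ < 1) (hπ : ∀ k ∈ s, π k ∈ s)
    (he : ∀ k ∈ s, |e k| ≤ σ * |e (π k)|) : ∀ k ∈ s, e k = 0 := by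
  intro k hk
  obtain ⟨k₀, hk₀, hmax⟩ := s.exists_max_image (|e ·|) ⟨k, hk⟩
  have : |e k₀| ≤ 0 := by
    nlinarith [he k₀ hk₀, hmax _ (hπ k₀ hk₀), abs_nonneg (e k₀), abs_nonneg (e (π k₀))]
  exact abs_nonpos_iff.1 ((hmax k hk).trans this)

section SupContraction

variable {α : Type*} {K : Set α} {T : (α → ℝ) → α → ℝ} {σ : ℝ}

theorem eqOn_of_sup_lipschitz
    (hlip : ∀ φ ψ C, (∀ p ∈ K, |φ p - ψ p| ≤ C) → ∀ p ∈ K, |T φ p - T ψ p| ≤ σ * C)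
    {φ ψ : α → ℝ} (h : EqOn φ ψ K) : EqOn (T φ) (T ψ) K := fun p hp =>
  sub_eq_zero.1 <| abs_nonpos_iff.1 <| by
    simpa using hlip φ ψ 0 (fun q hq => by simp [h hq]) p hp

variable [TopologicalSpace α]

theorem exists_unique_fixed_of_sup_contraction (hK : IsCompact K) (hσ₀ : 0 ≤ σ) (hσ : σ < 1)
    (hcont : ∀ φ, ContinuousOn φ K → ContinuousOn (T φ) K)
    (hlip : ∀ φ ψ C, (∀ p ∈ K, |φ p - ψ p| ≤ C) → ∀ p ∈ K, |T φ p - T ψ p| ≤ σ * C) :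
    ∃ f, ContinuousOn f K ∧ EqOn (T f) f K ∧
      ∀ f', ContinuousOn f' K → EqOn (T f') f' K → EqOn f' f K := by
  have := isCompact_iff_compactSpace.mp hK
  let res (f : α → ℝ) (hf : ContinuousOn f K) : C(K, ℝ) := ⟨K.domRestrict f, hf.domRestrict⟩
  let ext (φ : C(K, ℝ)) : α → ℝ := extend Subtype.val φ 0
  have ext_val (φ : C(K, ℝ)) (q : K) : ext φ q = φ q := Subtype.val_injective.extend_apply _ _ q
  have ext_cont (φ : C(K, ℝ)) : ContinuousOn (ext φ) K := by
    rw [continuousOn_iff_continuous_domRestrict]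
    convert φ.continuous using 1
    exact funext (ext_val φ)
  let Φ (φ : C(K, ℝ)) : C(K, ℝ) := res _ (hcont _ (ext_cont φ))
  have hΦ : ContractingWith ⟨σ, hσ₀⟩ Φ := by
    refine ⟨hσ, LipschitzWith.of_dist_le_mul fun φ ψ =>
      (ContinuousMap.dist_le (by positivity)).2 fun q => hlip _ _ _ (fun p hp => ?_) q q.2⟩
    rw [ext_val φ ⟨p, hp⟩, ext_val ψ ⟨p, hp⟩, ← Real.dist_eq]
    exact ContinuousMap.dist_apply_le_dist _
  have hΦφ₀ : Φ (hΦ.fixedPoint Φ) = hΦ.fixedPoint Φ := hΦ.fixedPoint_isFixedPt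
  refine ⟨ext (hΦ.fixedPoint Φ), ext_cont _, fun p hp => ?_, fun f' hf' hTf' p hp => ?_⟩
  · calc T (ext (hΦ.fixedPoint Φ)) p = Φ (hΦ.fixedPoint Φ) ⟨p, hp⟩ := rfl
      _ = ext (hΦ.fixedPoint Φ) p := by rw [hΦφ₀, ext_val _ ⟨p, hp⟩]
  · have hfix : IsFixedPt Φ (res f' hf') := by
      ext q
      exact (eqOn_of_sup_lipschitz hlip (fun p hp => ext_val (res f' hf') ⟨p, hp⟩) q.2).trans
        (hTf' q.2)
    rw [ext_val _ ⟨p, hp⟩, ← hΦ.fixedPoint_unique hfix]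
    rfl

end SupContraction

section Grid

variable {x : ℕ → ℝ}

theorem exists_mem_Icc_pred_of_mem_Icc {X : ℝ} :
    ∀ {n : ℕ}, 1 ≤ n → X ∈ Icc (x 0) (x n) → ∃ i, 1 ≤ i ∧ i ≤ n ∧ X ∈ Icc (x (i - 1)) (x i)
  | 0, h, _ => absurd h (by norm_num)
  | n + 1, _, hX => by
    by_cases h : 1 ≤ n ∧ X ≤ x n
    · obtain ⟨i, hi₁, hin, hXi⟩ := exists_mem_Icc_pred_of_mem_Icc h.1 ⟨hX.1, h.2⟩
      exact ⟨i, hi₁, by omega, hXi⟩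
    · refine ⟨n + 1, by omega, le_rfl, ?_, hX.2⟩
      rcases Nat.eq_zero_or_pos n with rfl | hn
      · exact hX.1
      · exact (not_le.1 fun hle => h ⟨hn, hle⟩).le

namespace StrictMonoOn

variable {n : ℕ} (hx : StrictMonoOn x (Iic n))
include hx

theorem mem_Icc_of_le {k : ℕ} (hk : k ≤ n) : x k ∈ Icc (x 0) (x n) :=
  ⟨hx.monotoneOn (mem_Iic.2 (Nat.zero_le n)) hk (Nat.zero_le k), hx.monotoneOn hk self_mem_Iic hk⟩

theorem Icc_pred_subset {i : ℕ} (hi : i ≤ n) : Icc (x (i - 1)) (x i) ⊆ Icc (x 0) (x n) :=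
  Icc_subset_Icc (hx.mem_Icc_of_le (by omega)).1 (hx.mem_Icc_of_le hi).2

theorem eq_pred_or_eq_of_mem_Icc {i k : ℕ} (hi : i ≤ n) (hk : k ≤ n)
    (h : x k ∈ Icc (x (i - 1)) (x i)) : k = i - 1 ∨ k = i := by
  have h1 := (hx.le_iff_le (show i - 1 ≤ n by omega) hk).1 h.1
  have h2 := (hx.le_iff_le hk hi).1 h.2
  omega

theorem eq_succ_of_mem_Icc_of_mem_Icc {i k : ℕ} (hik : i < k) (hk : k ≤ n) {X : ℝ}
    (hXi : X ∈ Icc (x (i - 1)) (x i)) (hXk : X ∈ Icc (x (k - 1)) (x k)) :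
    k = i + 1 ∧ X = x i := by
  have : k - 1 ≤ i := (hx.le_iff_le (show k - 1 ≤ n by omega) (show i ≤ n by omega)).1
    (hXk.1.trans hXi.2)
  obtain rfl : k = i + 1 := by omega
  exact ⟨rfl, le_antisymm hXi.2 hXk.1⟩

end StrictMonoOn

end Grid

namespace GenData

def uinv (D : GenData) (i : ℕ) : ℝ → ℝ := invFunOn (D.u i) (D.Ii' i)

def vinv (D : GenData) (j : ℕ) : ℝ → ℝ := invFunOn (D.v j) (D.Jj' j)

def xCell (D : GenData) (X : ℝ) : ℕ := Classical.epsilon fun i => 1 ≤ i ∧ i ≤ D.N ∧ X ∈ D.Ii i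

def yCell (D : GenData) (Y : ℝ) : ℕ := Classical.epsilon fun j => 1 ≤ j ∧ j ≤ D.M ∧ Y ∈ D.Jj j

def rbOnCell (D : GenData) (φ : ℝ × ℝ → ℝ) (i j : ℕ) (P : ℝ × ℝ) : ℝ :=
  D.F i j (D.uinv i P.1) (D.vinv j P.2) (φ (D.uinv i P.1, D.vinv j P.2))

/-- The Read–Bajraktarević operator `(T φ) (u_i x, v_j y) = F_ij (x, y, φ (x, y))`. On a grid line
the cell picked by `xCell`, `yCell` does not matter, by `rbOperator_eq_rbOnCell`. -/
def rbOperator (D : GenData) (φ : ℝ × ℝ → ℝ) (P : ℝ × ℝ) : ℝ :=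
  D.rbOnCell φ (D.xCell P.1) (D.yCell P.2) P

variable {D : GenData}

theorem x'_mem_Ii' {i k : ℕ} (hk : k = i - 1 ∨ k = i) : D.x' k ∈ D.Ii' i := by
  rcases hk with rfl | rfl
  exacts [left_mem_uIcc, right_mem_uIcc]

theorem y'_mem_Jj' {j l : ℕ} (hl : l = j - 1 ∨ l = j) : D.y' l ∈ D.Jj' j := by
  rcases hl with rfl | rfl
  exacts [left_mem_uIcc, right_mem_uIcc]

theorem FHyp.exists_alpha_le (hFH : D.FHyp) (hN : 1 ≤ D.N) (hM : 1 ≤ D.M) :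
    ∃ σ, 0 ≤ σ ∧ σ < 1 ∧ ∀ i j, 1 ≤ i → i ≤ D.N → 1 ≤ j → j ≤ D.M → D.alpha i j ≤ σ := by
  obtain ⟨⟨i₀, j₀⟩, hq₀, hmax⟩ := (Finset.Icc 1 D.N ×ˢ Finset.Icc 1 D.M).exists_max_image
    (fun q => D.alpha q.1 q.2) ⟨(1, 1), by simp [hN, hM]⟩
  simp only [Finset.mem_product, Finset.mem_Icc] at hq₀
  obtain ⟨hα₀, hα₁⟩ := hFH.halpha i₀ j₀ hq₀.1.1 hq₀.1.2 hq₀.2.1 hq₀.2.2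
  exact ⟨_, hα₀.le, hα₁, fun i j hi₁ hiN hj₁ hjM => hmax (i, j) (by simp [*])⟩

namespace GridHyp

variable (hD : D.GridHyp)
include hD

theorem x_strictMonoOn : StrictMonoOn D.x (Iic D.N) :=
  strictMonoOn_Iic_of_lt_succ hD.hx

theorem y_strictMonoOn : StrictMonoOn D.y (Iic D.M) :=
  strictMonoOn_Iic_of_lt_succ hD.hy

theorem x_mem_I {k : ℕ} (hk : k ≤ D.N) : D.x k ∈ D.I := hD.x_strictMonoOn.mem_Icc_of_le hk

theorem y_mem_J {l : ℕ} (hl : l ≤ D.M) : D.y l ∈ D.J := hD.y_strictMonoOn.mem_Icc_of_le hl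

theorem Dij_subset {i j : ℕ} (hi : i ≤ D.N) (hj : j ≤ D.M) : D.Dij i j ⊆ D.I ×ˢ D.J :=
  prod_mono (hD.x_strictMonoOn.Icc_pred_subset hi) (hD.y_strictMonoOn.Icc_pred_subset hj)

theorem Dij'_subset {i j : ℕ} (hi : i ≤ D.N) (hj : j ≤ D.M) : D.Dij' i j ⊆ D.I ×ˢ D.J :=
  prod_mono (uIcc_subset_Icc (hD.x_mem_I (hD.hpx _ (by omega))) (hD.x_mem_I (hD.hpx i hi)))
    (uIcc_subset_Icc (hD.y_mem_J (hD.hpy _ (by omega))) (hD.y_mem_J (hD.hpy j hj)))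

theorem xCell_spec {X : ℝ} (hX : X ∈ D.I) :
    1 ≤ D.xCell X ∧ D.xCell X ≤ D.N ∧ X ∈ D.Ii (D.xCell X) :=
  Classical.epsilon_spec (exists_mem_Icc_pred_of_mem_Icc (by have := hD.hN; omega) hX)

theorem yCell_spec {Y : ℝ} (hY : Y ∈ D.J) :
    1 ≤ D.yCell Y ∧ D.yCell Y ≤ D.M ∧ Y ∈ D.Jj (D.yCell Y) :=
  Classical.epsilon_spec (exists_mem_Icc_pred_of_mem_Icc (by have := hD.hM; omega) hY)

theorem I_prod_J_eq_iUnion : D.I ×ˢ D.J = ⋃ p : Fin D.N × Fin D.M, D.Dij (p.1 + 1) (p.2 + 1) := by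
  refine Subset.antisymm (fun P hP => ?_) (iUnion_subset fun p => hD.Dij_subset p.1.2 p.2.2)
  obtain ⟨hi₁, hiN, hPi⟩ := hD.xCell_spec hP.1
  obtain ⟨hj₁, hjM, hPj⟩ := hD.yCell_spec hP.2
  refine mem_iUnion.2 ⟨(⟨D.xCell P.1 - 1, by omega⟩, ⟨D.yCell P.2 - 1, by omega⟩), ?_⟩
  show P ∈ D.Dij (D.xCell P.1 - 1 + 1) (D.yCell P.2 - 1 + 1)
  rw [Nat.sub_add_cancel hi₁, Nat.sub_add_cancel hj₁]
  exact ⟨hPi, hPj⟩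

section XChart

variable {i : ℕ} (hi₁ : 1 ≤ i) (hiN : i ≤ D.N)
include hi₁ hiN

theorem continuousOn_u : ContinuousOn (D.u i) (D.Ii' i) := by
  obtain ⟨c, hc₀, -, hc⟩ := (hD.hu i hi₁ hiN).1
  refine (LipschitzOnWith.of_dist_le_mul (K := ⟨c, hc₀⟩) fun s hs t ht => ?_).continuousOn
  rw [Real.dist_eq, Real.dist_eq]
  exact hc s hs t ht

theorem continuousOn_uinv : ContinuousOn (D.uinv i) (D.Ii i) :=
  (hD.hu i hi₁ hiN).2.1.continuousOn_invFunOn isCompact_uIcc (hD.continuousOn_u hi₁ hiN)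

theorem uinv_u {s : ℝ} (hs : s ∈ D.Ii' i) : D.uinv i (D.u i s) = s :=
  (hD.hu i hi₁ hiN).2.1.invOn_invFunOn.1 hs

theorem u_uinv {X : ℝ} (hX : X ∈ D.Ii i) : D.u i (D.uinv i X) = X :=
  (hD.hu i hi₁ hiN).2.1.invOn_invFunOn.2 hX

theorem uinv_mem {X : ℝ} (hX : X ∈ D.Ii i) : D.uinv i X ∈ D.Ii' i :=
  (hD.hu i hi₁ hiN).2.1.surjOn.mapsTo_invFunOn hX

theorem u_mem {s : ℝ} (hs : s ∈ D.Ii' i) : D.u i s ∈ D.Ii i :=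
  (hD.hu i hi₁ hiN).2.1.mapsTo hs

theorem u_x' {k : ℕ} (hk : k = i - 1 ∨ k = i) : D.u i (D.x' k) = D.x k := by
  rcases hk with rfl | rfl
  exacts [(hD.hu _ hi₁ hiN).2.2.1, (hD.hu _ hi₁ hiN).2.2.2]

theorem uinv_x {k : ℕ} (hk : k = i - 1 ∨ k = i) : D.uinv i (D.x k) = D.x' k := by
  rw [← hD.u_x' hi₁ hiN hk, hD.uinv_u hi₁ hiN (x'_mem_Ii' hk)]

end XChart

section YChart

variable {j : ℕ} (hj₁ : 1 ≤ j) (hjM : j ≤ D.M)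
include hj₁ hjM

theorem continuousOn_v : ContinuousOn (D.v j) (D.Jj' j) := by
  obtain ⟨c, hc₀, -, hc⟩ := (hD.hv j hj₁ hjM).1
  refine (LipschitzOnWith.of_dist_le_mul (K := ⟨c, hc₀⟩) fun s hs t ht => ?_).continuousOn
  rw [Real.dist_eq, Real.dist_eq]
  exact hc s hs t ht

theorem continuousOn_vinv : ContinuousOn (D.vinv j) (D.Jj j) :=
  (hD.hv j hj₁ hjM).2.1.continuousOn_invFunOn isCompact_uIcc (hD.continuousOn_v hj₁ hjM)

theorem vinv_v {s : ℝ} (hs : s ∈ D.Jj' j) : D.vinv j (D.v j s) = s :=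
  (hD.hv j hj₁ hjM).2.1.invOn_invFunOn.1 hs

theorem v_vinv {Y : ℝ} (hY : Y ∈ D.Jj j) : D.v j (D.vinv j Y) = Y :=
  (hD.hv j hj₁ hjM).2.1.invOn_invFunOn.2 hY

theorem vinv_mem {Y : ℝ} (hY : Y ∈ D.Jj j) : D.vinv j Y ∈ D.Jj' j :=
  (hD.hv j hj₁ hjM).2.1.surjOn.mapsTo_invFunOn hY

theorem v_mem {s : ℝ} (hs : s ∈ D.Jj' j) : D.v j s ∈ D.Jj j :=
  (hD.hv j hj₁ hjM).2.1.mapsTo hs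

theorem v_y' {l : ℕ} (hl : l = j - 1 ∨ l = j) : D.v j (D.y' l) = D.y l := by
  rcases hl with rfl | rfl
  exacts [(hD.hv _ hj₁ hjM).2.2.1, (hD.hv _ hj₁ hjM).2.2.2]

theorem vinv_y {l : ℕ} (hl : l = j - 1 ∨ l = j) : D.vinv j (D.y l) = D.y' l := by
  rw [← hD.v_y' hj₁ hjM hl, hD.vinv_v hj₁ hjM (y'_mem_Jj' hl)]

end YChart

section Matchable

variable (hM : D.Matchable) (φ : ℝ × ℝ → ℝ)
include hM

theorem rbOnCell_succ_left {i j : ℕ} (hi₁ : 1 ≤ i) (hiN : i < D.N) (hj₁ : 1 ≤ j) (hjM : j ≤ D.M)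
    {Y : ℝ} (hY : Y ∈ D.Jj j) :
    D.rbOnCell φ i j (D.x i, Y) = D.rbOnCell φ (i + 1) j (D.x i, Y) := by
  have hx'₁ : D.uinv i (D.x i) = D.x' i := hD.uinv_x hi₁ hiN.le (Or.inr rfl)
  have hx'₂ : D.uinv (i + 1) (D.x i) = D.x' i := hD.uinv_x (by omega) hiN (Or.inl rfl)
  simp only [rbOnCell, hx'₁, hx'₂]
  exact hM.1 i j hi₁ hiN hj₁ hjM _ (hD.vinv_mem hj₁ hjM hY) _

theorem rbOnCell_succ_right {i j : ℕ} (hi₁ : 1 ≤ i) (hiN : i ≤ D.N) (hj₁ : 1 ≤ j) (hjM : j < D.M)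
    {X : ℝ} (hX : X ∈ D.Ii i) :
    D.rbOnCell φ i j (X, D.y j) = D.rbOnCell φ i (j + 1) (X, D.y j) := by
  have hy'₁ : D.vinv j (D.y j) = D.y' j := hD.vinv_y hj₁ hjM.le (Or.inr rfl)
  have hy'₂ : D.vinv (j + 1) (D.y j) = D.y' j := hD.vinv_y (by omega) hjM (Or.inl rfl)
  simp only [rbOnCell, hy'₁, hy'₂]
  exact hM.2 i j hi₁ hiN hj₁ hjM _ (hD.uinv_mem hi₁ hiN hX) _

theorem rbOnCell_eq_of_mem_Ii {i k j : ℕ} (hi₁ : 1 ≤ i) (hiN : i ≤ D.N) (hk₁ : 1 ≤ k)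
    (hkN : k ≤ D.N) (hj₁ : 1 ≤ j) (hjM : j ≤ D.M) {P : ℝ × ℝ} (hPi : P.1 ∈ D.Ii i)
    (hPk : P.1 ∈ D.Ii k) (hPj : P.2 ∈ D.Jj j) : D.rbOnCell φ i j P = D.rbOnCell φ k j P := by
  obtain ⟨X, Y⟩ := P
  rcases lt_trichotomy i k with hik | rfl | hki
  · obtain ⟨rfl, rfl⟩ := hD.x_strictMonoOn.eq_succ_of_mem_Icc_of_mem_Icc hik hkN hPi hPk
    exact hD.rbOnCell_succ_left hM φ hi₁ hkN hj₁ hjM hPj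
  · rfl
  · obtain ⟨rfl, rfl⟩ := hD.x_strictMonoOn.eq_succ_of_mem_Icc_of_mem_Icc hki hiN hPk hPi
    exact (hD.rbOnCell_succ_left hM φ hk₁ hiN hj₁ hjM hPj).symm

theorem rbOnCell_eq_of_mem_Jj {i j l : ℕ} (hi₁ : 1 ≤ i) (hiN : i ≤ D.N) (hj₁ : 1 ≤ j)
    (hjM : j ≤ D.M) (hl₁ : 1 ≤ l) (hlM : l ≤ D.M) {P : ℝ × ℝ} (hPi : P.1 ∈ D.Ii i)
    (hPj : P.2 ∈ D.Jj j) (hPl : P.2 ∈ D.Jj l) : D.rbOnCell φ i j P = D.rbOnCell φ i l P := by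
  obtain ⟨X, Y⟩ := P
  rcases lt_trichotomy j l with hjl | rfl | hlj
  · obtain ⟨rfl, rfl⟩ := hD.y_strictMonoOn.eq_succ_of_mem_Icc_of_mem_Icc hjl hlM hPj hPl
    exact hD.rbOnCell_succ_right hM φ hi₁ hiN hj₁ hlM hPi
  · rfl
  · obtain ⟨rfl, rfl⟩ := hD.y_strictMonoOn.eq_succ_of_mem_Icc_of_mem_Icc hlj hjM hPl hPj
    exact (hD.rbOnCell_succ_right hM φ hi₁ hiN hl₁ hjM hPi).symm

theorem rbOperator_eq_rbOnCell {i j : ℕ} (hi₁ : 1 ≤ i) (hiN : i ≤ D.N) (hj₁ : 1 ≤ j)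
    (hjM : j ≤ D.M) {P : ℝ × ℝ} (hP : P ∈ D.Dij i j) : D.rbOperator φ P = D.rbOnCell φ i j P := by
  have hPK := hD.Dij_subset hiN hjM hP
  obtain ⟨hk₁, hkN, hPk⟩ := hD.xCell_spec hPK.1
  obtain ⟨hl₁, hlM, hPl⟩ := hD.yCell_spec hPK.2
  exact (hD.rbOnCell_eq_of_mem_Jj hM φ hk₁ hkN hl₁ hlM hj₁ hjM hPk hPl hP.2).trans
    (hD.rbOnCell_eq_of_mem_Ii hM φ hk₁ hkN hi₁ hiN hj₁ hjM hPk hP.1 hP.2)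

end Matchable

theorem continuousOn_rbOnCell (hFH : D.FHyp) {φ : ℝ × ℝ → ℝ}
    (hφ : ContinuousOn φ (D.I ×ˢ D.J)) {i j : ℕ} (hi₁ : 1 ≤ i) (hiN : i ≤ D.N) (hj₁ : 1 ≤ j)
    (hjM : j ≤ D.M) : ContinuousOn (D.rbOnCell φ i j) (D.Dij i j) := by
  let w (P : ℝ × ℝ) : ℝ × ℝ := (D.uinv i P.1, D.vinv j P.2)
  have hw : ContinuousOn w (D.Dij i j) :=
    ((hD.continuousOn_uinv hi₁ hiN).comp continuousOn_fst fun _ hP => hP.1).prodMk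
      ((hD.continuousOn_vinv hj₁ hjM).comp continuousOn_snd fun _ hP => hP.2)
  have hwD : MapsTo w (D.Dij i j) (D.Dij' i j) := fun P hP =>
    ⟨hD.uinv_mem hi₁ hiN hP.1, hD.vinv_mem hj₁ hjM hP.2⟩
  exact (hFH.hFcont i j hi₁ hiN hj₁ hjM).comp
    (hw.prodMk ((hφ.mono (hD.Dij'_subset hiN hjM)).comp hw hwD)) fun P hP => ⟨hwD hP, trivial⟩

theorem continuousOn_rbOperator (hFH : D.FHyp) (hM : D.Matchable) {φ : ℝ × ℝ → ℝ}
    (hφ : ContinuousOn φ (D.I ×ˢ D.J)) : ContinuousOn (D.rbOperator φ) (D.I ×ˢ D.J) := by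
  rw [hD.I_prod_J_eq_iUnion]
  refine LocallyFinite.continuousOn_iUnion (locallyFinite_of_finite _)
    (fun _ => isClosed_Icc.prod isClosed_Icc) fun p => ?_
  have hiN : (p.1 : ℕ) + 1 ≤ D.N := p.1.2
  have hjM : (p.2 : ℕ) + 1 ≤ D.M := p.2.2
  exact (hD.continuousOn_rbOnCell hFH hφ (by omega) hiN (by omega) hjM).congr fun P hP =>
    hD.rbOperator_eq_rbOnCell hM φ (by omega) hiN (by omega) hjM hP

section Contraction

variable (hFH : D.FHyp) {σ : ℝ}
  (hσ : ∀ i j, 1 ≤ i → i ≤ D.N → 1 ≤ j → j ≤ D.M → D.alpha i j ≤ σ)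
include hFH hσ

theorem abs_rbOperator_sub_le {φ ψ : ℝ × ℝ → ℝ} {C : ℝ}
    (hC : ∀ p ∈ D.I ×ˢ D.J, |φ p - ψ p| ≤ C) {P : ℝ × ℝ} (hP : P ∈ D.I ×ˢ D.J) :
    |D.rbOperator φ P - D.rbOperator ψ P| ≤ σ * C := by
  obtain ⟨hi₁, hiN, hPi⟩ := hD.xCell_spec hP.1
  obtain ⟨hj₁, hjM, hPj⟩ := hD.yCell_spec hP.2
  have hp : (D.uinv _ P.1, D.vinv _ P.2) ∈ D.Dij' (D.xCell P.1) (D.yCell P.2) :=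
    ⟨hD.uinv_mem hi₁ hiN hPi, hD.vinv_mem hj₁ hjM hPj⟩
  have hCp := hC _ (hD.Dij'_subset hiN hjM hp)
  calc _ ≤ D.alpha _ _ * |φ _ - ψ _| := hFH.hFlip _ _ hi₁ hiN hj₁ hjM _ hp _ _
    _ ≤ D.alpha _ _ * C := mul_le_mul_of_nonneg_left hCp (hFH.halpha _ _ hi₁ hiN hj₁ hjM).1.le
    _ ≤ σ * C := mul_le_mul_of_nonneg_right (hσ _ _ hi₁ hiN hj₁ hjM) ((abs_nonneg _).trans hCp)

theorem abs_rbOperator_grid_sub_le (φ : ℝ × ℝ → ℝ) {k l : ℕ} (hk : k ≤ D.N) (hl : l ≤ D.M) :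
    |D.rbOperator φ (D.x k, D.y l) - D.z k l| ≤ σ * |φ (D.x' k, D.y' l) - D.z' k l| := by
  obtain ⟨hi₁, hiN, hki⟩ := hD.xCell_spec (hD.x_mem_I hk)
  obtain ⟨hj₁, hjM, hlj⟩ := hD.yCell_spec (hD.y_mem_J hl)
  have hk' := hD.x_strictMonoOn.eq_pred_or_eq_of_mem_Icc hiN hk hki
  have hl' := hD.y_strictMonoOn.eq_pred_or_eq_of_mem_Icc hjM hl hlj
  have hp : (D.x' k, D.y' l) ∈ D.Dij' (D.xCell (D.x k)) (D.yCell (D.y l)) :=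
    ⟨x'_mem_Ii' hk', y'_mem_Jj' hl'⟩
  simp only [rbOperator, rbOnCell, hD.uinv_x hi₁ hiN hk', hD.vinv_y hj₁ hjM hl']
  rw [← hFH.hFval _ _ hi₁ hiN hj₁ hjM k hk' l hl']
  exact (hFH.hFlip _ _ hi₁ hiN hj₁ hjM _ hp _ _).trans
    (mul_le_mul_of_nonneg_right (hσ _ _ hi₁ hiN hj₁ hjM) (abs_nonneg _))

end Contraction

theorem interpolates_of_rbOperator_fixed (hFH : D.FHyp) {f : ℝ × ℝ → ℝ}
    (hf : EqOn (D.rbOperator f) f (D.I ×ˢ D.J)) {k l : ℕ} (hk : k ≤ D.N) (hl : l ≤ D.M) :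
    f (D.x k, D.y l) = D.z k l := by
  obtain ⟨σ, hσ₀, hσ₁, hσ⟩ := hFH.exists_alpha_le (by have := hD.hN; omega)
    (by have := hD.hM; omega)
  refine sub_eq_zero.1 <| Finset.eq_zero_of_abs_le_mul_abs_comp
    (s := Finset.range (D.N + 1) ×ˢ Finset.range (D.M + 1))
    (e := fun q => f (D.x q.1, D.y q.2) - D.z q.1 q.2) (π := fun q => (D.px q.1, D.py q.2))
    hσ₀ hσ₁ (fun q hq => ?_) (fun q hq => ?_) (k, l)
    (by simp only [Finset.mem_product, Finset.mem_range]; omega)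
  all_goals simp only [Finset.mem_product, Finset.mem_range, Nat.lt_succ_iff] at hq ⊢
  · exact ⟨hD.hpx _ hq.1, hD.hpy _ hq.2⟩
  · rw [← hf (mk_mem_prod (hD.x_mem_I hq.1) (hD.y_mem_J hq.2))]
    exact hD.abs_rbOperator_grid_sub_le hFH hσ f hq.1 hq.2

theorem selfReferential_iff_rbOperator_fixed (hM : D.Matchable) {f : ℝ × ℝ → ℝ} :
    (∀ i j, 1 ≤ i → i ≤ D.N → 1 ≤ j → j ≤ D.M →
      ∀ p ∈ D.Dij' i j, f (D.u i p.1, D.v j p.2) = D.F i j p.1 p.2 (f p)) ↔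
    EqOn (D.rbOperator f) f (D.I ×ˢ D.J) := by
  refine ⟨fun hf P hP => ?_, fun hf i j hi₁ hiN hj₁ hjM p hp => ?_⟩
  · obtain ⟨hi₁, hiN, hPi⟩ := hD.xCell_spec hP.1
    obtain ⟨hj₁, hjM, hPj⟩ := hD.yCell_spec hP.2
    have := hf _ _ hi₁ hiN hj₁ hjM (D.uinv _ P.1, D.vinv _ P.2)
      ⟨hD.uinv_mem hi₁ hiN hPi, hD.vinv_mem hj₁ hjM hPj⟩
    rw [hD.u_uinv hi₁ hiN hPi, hD.v_vinv hj₁ hjM hPj] at this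
    exact this.symm
  · have hP : (D.u i p.1, D.v j p.2) ∈ D.Dij i j :=
      ⟨hD.u_mem hi₁ hiN hp.1, hD.v_mem hj₁ hjM hp.2⟩
    rw [← hf (hD.Dij_subset hiN hjM hP), hD.rbOperator_eq_rbOnCell hM f hi₁ hiN hj₁ hjM hP,
      rbOnCell, hD.uinv_u hi₁ hiN hp.1, hD.vinv_v hj₁ hjM hp.2]

theorem isRFIF_iff (hFH : D.FHyp) (hM : D.Matchable) {f : ℝ × ℝ → ℝ} :
    D.IsRFIF f ↔ ContinuousOn f (D.I ×ˢ D.J) ∧ EqOn (D.rbOperator f) f (D.I ×ˢ D.J) := by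
  rw [IsRFIF, hD.selfReferential_iff_rbOperator_fixed hM]
  exact ⟨fun hf => ⟨hf.1, hf.2.2⟩, fun ⟨hc, hfix⟩ =>
    ⟨hc, fun k hk l hl => hD.interpolates_of_rbOperator_fixed hFH hfix hk hl, hfix⟩⟩

theorem exists_unique_isRFIF (hFH : D.FHyp) (hM : D.Matchable) :
    ∃ f, D.IsRFIF f ∧ ∀ f', D.IsRFIF f' → EqOn f' f (D.I ×ˢ D.J) := by
  obtain ⟨σ, hσ₀, hσ₁, hσ⟩ := hFH.exists_alpha_le (by have := hD.hN; omega)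
    (by have := hD.hM; omega)
  obtain ⟨f, hfc, hfix, huniq⟩ := exists_unique_fixed_of_sup_contraction
    (isCompact_Icc.prod isCompact_Icc) hσ₀ hσ₁ (fun _ => hD.continuousOn_rbOperator hFH hM)
    (fun _ _ _ hC _ => hD.abs_rbOperator_sub_le hFH hσ hC)
  simp only [hD.isRFIF_iff hFH hM]
  exact ⟨f, ⟨hfc, hfix⟩, fun f' hf' => huniq f' hf'.1 hf'.2⟩

section AffineF

variable {h S : ℝ × ℝ → ℝ} {g : ℕ → ℕ → ℝ × ℝ → ℝ}
  (hF : ∀ i j x y w, D.F i j x y w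
    = S (D.u i x, D.v j y) * (w - g i j (x, y)) + h (D.u i x, D.v j y))
include hF

theorem continuousOn_F_of_eq (hhcont : ContinuousOn h (D.I ×ˢ D.J))
    (hScont : ContinuousOn S (D.I ×ˢ D.J)) {i j : ℕ}
    (hgcont : ContinuousOn (g i j) (D.Dij' i j)) (hi₁ : 1 ≤ i) (hiN : i ≤ D.N) (hj₁ : 1 ≤ j)
    (hjM : j ≤ D.M) :
    ContinuousOn (fun p : (ℝ × ℝ) × ℝ => D.F i j p.1.1 p.1.2 p.2) (D.Dij' i j ×ˢ univ) := by
  let w (p : (ℝ × ℝ) × ℝ) : ℝ × ℝ := (D.u i p.1.1, D.v j p.1.2)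
  have hw : ContinuousOn w (D.Dij' i j ×ˢ univ) :=
    ((hD.continuousOn_u hi₁ hiN).comp (continuous_fst.comp continuous_fst).continuousOn
      fun _ hp => hp.1.1).prodMk
    ((hD.continuousOn_v hj₁ hjM).comp (continuous_snd.comp continuous_fst).continuousOn
      fun _ hp => hp.1.2)
  have hwK : MapsTo w (D.Dij' i j ×ˢ univ) (D.I ×ˢ D.J) := fun p hp =>
    hD.Dij_subset hiN hjM ⟨hD.u_mem hi₁ hiN hp.1.1, hD.v_mem hj₁ hjM hp.1.2⟩
  simp only [hF]
  exact ((hScont.comp hw hwK).mul (continuousOn_snd.sub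
    (hgcont.comp continuousOn_fst fun _ hp => hp.1))).add (hhcont.comp hw hwK)

theorem fHyp_of_eq (hhcont : ContinuousOn h (D.I ×ˢ D.J))
    (hhval : ∀ i ≤ D.N, ∀ j ≤ D.M, h (D.x i, D.y j) = D.z i j)
    (hScont : ContinuousOn S (D.I ×ˢ D.J))
    (hgcont : ∀ i j, 1 ≤ i → i ≤ D.N → 1 ≤ j → j ≤ D.M → ContinuousOn (g i j) (D.Dij' i j))
    (hgval : ∀ i j, 1 ≤ i → i ≤ D.N → 1 ≤ j → j ≤ D.M →
      ∀ k ∈ ({i - 1, i} : Set ℕ), ∀ l ∈ ({j - 1, j} : Set ℕ),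
        g i j (D.x' k, D.y' l) = D.z' k l)
    {σ : ℝ} (hσ₀ : 0 < σ) (hσ₁ : σ < 1) (hSσ : ∀ p ∈ D.I ×ˢ D.J, |S p| ≤ σ) :
    FHyp { D with alpha := fun _ _ => σ } where
  hFcont i j hi₁ hiN hj₁ hjM :=
    hD.continuousOn_F_of_eq hF hhcont hScont (hgcont i j hi₁ hiN hj₁ hjM) hi₁ hiN hj₁ hjM
  hFval i j hi₁ (hiN : i ≤ D.N) hj₁ (hjM : j ≤ D.M) k hk l hl := by
    show D.F i j (D.x' k) (D.y' l) (D.z' k l) = D.z k l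
    rw [hF, hD.u_x' hi₁ hiN hk, hD.v_y' hj₁ hjM hl, hgval i j hi₁ hiN hj₁ hjM k hk l hl,
      sub_self, mul_zero, zero_add]
    exact hhval k (by rcases hk with rfl | rfl <;> omega) l (by rcases hl with rfl | rfl <;> omega)
  halpha _ _ _ _ _ _ := ⟨hσ₀, hσ₁⟩
  hFlip i j hi₁ hiN hj₁ hjM p hp z₁ z₂ := by
    show |D.F i j p.1 p.2 z₁ - D.F i j p.1 p.2 z₂| ≤ σ * |z₁ - z₂|
    have hdiff : D.F i j p.1 p.2 z₁ - D.F i j p.1 p.2 z₂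
        = S (D.u i p.1, D.v j p.2) * (z₁ - z₂) := by
      rw [hF, hF]
      ring
    rw [hdiff, abs_mul]
    exact mul_le_mul_of_nonneg_right (hSσ _ (hD.Dij_subset hiN hjM
      ⟨hD.u_mem hi₁ hiN hp.1, hD.v_mem hj₁ hjM hp.2⟩)) (abs_nonneg _)

theorem matchable_of_eq
    (hmatch1 : ∀ i j, 1 ≤ i → i < D.N → 1 ≤ j → j ≤ D.M →
      ∀ t ∈ D.Jj' j, g i j (D.x' i, t) = g (i + 1) j (D.x' i, t))
    (hmatch2 : ∀ i j, 1 ≤ i → i ≤ D.N → 1 ≤ j → j < D.M →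
      ∀ t ∈ D.Ii' i, g i j (t, D.y' j) = g i (j + 1) (t, D.y' j)) :
    D.Matchable := by
  refine ⟨fun i j hi₁ hiN hj₁ hjM t ht w => ?_, fun i j hi₁ hiN hj₁ hjM t ht w => ?_⟩
  · rw [hF, hF, hD.u_x' hi₁ hiN.le (Or.inr rfl),
      hD.u_x' (i := i + 1) (k := i) (by omega) hiN (Or.inl rfl),
      hmatch1 i j hi₁ hiN hj₁ hjM t ht]
  · rw [hF, hF, hD.v_y' hj₁ hjM.le (Or.inr rfl),
      hD.v_y' (j := j + 1) (l := j) (by omega) hjM (Or.inl rfl),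
      hmatch2 i j hi₁ hiN hj₁ hjM t ht]

end AffineF

end GridHyp

end GenData

open GenData in
/-- **Theorem 3.1.**  With `F_{ij}(x,y,z) = S(u_i x, v_j y)(z − g_{ij}(x,y)) + h(u_i x, v_j y)`,
where `h` is continuous and interpolates the data, `|S| < 1` on `I × J`, and the `g_{ij}`
are continuous with the corner conditions, the matchable conditions on the `g_{ij}` imply
that there is a unique continuous `f` on `I × J` interpolating the data with
`f (u_i x, v_j y) = F_{ij}(x, y, f(x,y))` on each `D'_{ij}`. -/
theorem exists_unique_RFIF_of_g_matchable (D : GenData) (hD : D.GridHyp)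
    (h S : ℝ × ℝ → ℝ) (g : ℕ → ℕ → ℝ × ℝ → ℝ)
    (hhcont : ContinuousOn h (D.I ×ˢ D.J))
    (hhval : ∀ i ≤ D.N, ∀ j ≤ D.M, h (D.x i, D.y j) = D.z i j)
    (hScont : ContinuousOn S (D.I ×ˢ D.J))
    (hSlt : ∀ p ∈ D.I ×ˢ D.J, |S p| < 1)
    (hgcont : ∀ i j, 1 ≤ i → i ≤ D.N → 1 ≤ j → j ≤ D.M → ContinuousOn (g i j) (D.Dij' i j))
    (hgval : ∀ i j, 1 ≤ i → i ≤ D.N → 1 ≤ j → j ≤ D.M →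
      ∀ k ∈ ({i - 1, i} : Set ℕ), ∀ l ∈ ({j - 1, j} : Set ℕ),
        g i j (D.x' k, D.y' l) = D.z' k l)
    (hF : ∀ i j x y w, D.F i j x y w
      = S (D.u i x, D.v j y) * (w - g i j (x, y)) + h (D.u i x, D.v j y))
    (hmatch1 : ∀ i j, 1 ≤ i → i < D.N → 1 ≤ j → j ≤ D.M →
      ∀ t ∈ D.Jj' j, g i j (D.x' i, t) = g (i + 1) j (D.x' i, t))
    (hmatch2 : ∀ i j, 1 ≤ i → i ≤ D.N → 1 ≤ j → j < D.M →
      ∀ t ∈ D.Ii' i, g i j (t, D.y' j) = g i (j + 1) (t, D.y' j)) :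
    ∃ f : ℝ × ℝ → ℝ, D.IsRFIF f ∧
      ∀ f' : ℝ × ℝ → ℝ, D.IsRFIF f' → Set.EqOn f' f (D.I ×ˢ D.J) := by
  obtain ⟨σ, hσ₀, hσ₁, hSσ⟩ :=
    (isCompact_Icc.prod isCompact_Icc).exists_forall_abs_le_lt_one hScont hSlt
  -- `F` is `σ`-contractive in `w`, so it satisfies `FHyp` once the ratios `alpha` are set to `σ`
  exact GridHyp.exists_unique_isRFIF (D := { D with alpha := fun _ _ => σ }) { hD with }
    (hD.fHyp_of_eq hF hhcont hhval hScont hgcont hgval hσ₀ hσ₁ hSσ)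
    (hD.matchable_of_eq hF hmatch1 hmatch2)
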